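/- Let V be a finite-dimensional vector space over a field and let D be an endomorphism of V. Since D maps range(D^{2i}) into range(D^{2i+1}) and range(D^{2i+1}) into range(D^{2i+2}), D induces a linear map D̄_i : range(D^{2i})/range(D^{2i+1}) → range(D^{2i+1})/range(D^{2i+2}) for each i ≥ 0. Then Σ_{i≥0} dim ker(D̄_i) = Σ_{k≥0} dim H^k(V,D), as natural numbers, with only finitely many nonzero terms on each side. (Second expression for the total higher Dirac cohomology in Remark 5.8.) -/

import Mathlib

/-!
Write `r n = dim range Dⁿ`. Since `D` maps `range Dⁿ` onto `range Dⁿ⁺¹`, rank–nullity for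
`D` restricted to `range Dⁿ` gives `dim (range Dⁿ ⊓ ker D) = r n - r (n + 1)`, so the
quotient `(range Dⁿ ⊓ ker D) / (range Dⁿ⁺¹ ⊓ ker D)` has dimension
`r n - 2 r (n + 1) + r (n + 2)`. For the same reason `D̄ₙ` is surjective, so its kernel has
dimension `(r n - r (n + 1)) - (r (n + 1) - r (n + 2))` as well.
The two sums therefore agree term by term.
-/

open LinearMap Module

section

variable {𝕜 V : Type*} [Field 𝕜] [AddCommGroup V] [Module 𝕜 V]

theorem apply_mem_range_pow_succ (D : Module.End 𝕜 V) (n : ℕ) :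
    ∀ x ∈ range (D ^ n), D x ∈ range (D ^ (n + 1)) := by
  rintro x ⟨y, rfl⟩
  exact ⟨y, by rw [pow_succ']; rfl⟩

/-- The map `D̄_n : range D^n / range D^{n+1} → range D^{n+1} / range D^{n+2}`
induced by `D`. -/
noncomputable def inducedQuotientMap (D : Module.End 𝕜 V) (n : ℕ) :
    (↥(range (D ^ n)) ⧸
        Submodule.comap (range (D ^ n)).subtype (range (D ^ (n + 1)))) →ₗ[𝕜]
      (↥(range (D ^ (n + 1))) ⧸
        Submodule.comap (range (D ^ (n + 1))).subtype (range (D ^ (n + 2)))) :=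
  Submodule.mapQ _ _ (D.restrict (apply_mem_range_pow_succ D n)) (by
    intro x hx
    simp only [Submodule.mem_comap, LinearMap.restrict_apply, Submodule.coe_subtype] at hx ⊢
    exact apply_mem_range_pow_succ D (n + 1) _ hx)

section RankNullity

variable {K E F : Type*} [DivisionRing K] [AddCommGroup E] [Module K E] [AddCommGroup F]
  [Module K F]

theorem Submodule.finrank_map_add_finrank_inf_ker (f : E →ₗ[K] F) (p : Submodule K E)
    [FiniteDimensional K p] :
    finrank K (p.map f) + finrank K ↥(p ⊓ ker f) = finrank K p := by
  have h := finrank_range_add_finrank_ker (f ∘ₗ p.subtype)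
  rw [range_comp, Submodule.range_subtype, ker_comp] at h
  rwa [← (Submodule.comapSubtypeEquivOfLe inf_le_left).finrank_eq, Submodule.comap_inf,
    Submodule.comap_subtype_self, top_inf_eq]

theorem Submodule.finrank_quotient_comap_subtype_add_finrank {p q : Submodule K E}
    [FiniteDimensional K p] (h : q ≤ p) :
    finrank K (p ⧸ q.comap p.subtype) + finrank K q = finrank K p := by
  rw [← (Submodule.comapSubtypeEquivOfLe h).finrank_eq]
  exact Submodule.finrank_quotient_add_finrank _

end RankNullity

section RangePow

variable {R M : Type*} [Semiring R] [AddCommMonoid M] [Module R M]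

theorem Module.End.range_pow_succ_eq_map (D : Module.End R M) (n : ℕ) :
    range (D ^ (n + 1)) = (range (D ^ n)).map D := by
  rw [pow_succ', Module.End.mul_eq_comp, range_comp]

theorem Module.End.range_pow_succ_le (D : Module.End R M) (n : ℕ) :
    range (D ^ (n + 1)) ≤ range (D ^ n) :=
  (iterateRange D).monotone n.le_succ

end RangePow

theorem range_inducedQuotientMap (D : Module.End 𝕜 V) (n : ℕ) :
    range (inducedQuotientMap D n) = ⊤ := by
  rw [inducedQuotientMap, Submodule.range_mapQ, range_restrict, ← D.range_pow_succ_eq_map,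
    Submodule.comap_subtype_self, Submodule.map_top, Submodule.range_mkQ]

theorem Module.End.finrank_range_pow_inf_ker_add [FiniteDimensional 𝕜 V] (D : Module.End 𝕜 V)
    (n : ℕ) :
    finrank 𝕜 ↥(range (D ^ n) ⊓ ker D) + finrank 𝕜 (range (D ^ (n + 1))) =
      finrank 𝕜 (range (D ^ n)) := by
  rw [add_comm, D.range_pow_succ_eq_map]
  exact Submodule.finrank_map_add_finrank_inf_ker D _

theorem finrank_ker_inducedQuotientMap [FiniteDimensional 𝕜 V] (D : Module.End 𝕜 V)
    (n : ℕ) :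
    finrank 𝕜 (ker (inducedQuotientMap D n)) =
      finrank 𝕜 (↥(range (D ^ n) ⊓ ker D) ⧸
        (range (D ^ (n + 1)) ⊓ ker D).comap (range (D ^ n) ⊓ ker D).subtype) := by
  have hker := finrank_range_add_finrank_ker (inducedQuotientMap D n)
  rw [range_inducedQuotientMap, finrank_top] at hker
  have hQ := Submodule.finrank_quotient_comap_subtype_add_finrank (D.range_pow_succ_le n)
  have hQ' := Submodule.finrank_quotient_comap_subtype_add_finrank (D.range_pow_succ_le (n + 1))
  have hH := Submodule.finrank_quotient_comap_subtype_add_finrank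
    (inf_le_inf_right (ker D) (D.range_pow_succ_le n))
  have hK := D.finrank_range_pow_inf_ker_add n
  have hK' := D.finrank_range_pow_inf_ker_add (n + 1)
  rw [show n + 1 + 1 = n + 2 from rfl] at hQ' hK'
  omega

/-- Remark 5.8, second expression. For a finite-dimensional `V`
with endomorphism `D`, and `D̄_i : range D^{2i}/range D^{2i+1} → range D^{2i+1}/range D^{2i+2}`
induced by `D`, one has `Σ_{i≥0} dim ker D̄_i = Σ_{k≥0} dim H^k(V,D)` (all but finitely
many terms vanish on each side; the sums are `finsum`s). -/
theorem stmt15 [FiniteDimensional 𝕜 V] (D : Module.End 𝕜 V) :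
    ∑ᶠ i : ℕ, finrank 𝕜 ↥(ker (inducedQuotientMap D (2 * i))) =
      ∑ᶠ k : ℕ, finrank 𝕜
        (↥(range (D ^ (2 * k)) ⊓ ker D) ⧸
          Submodule.comap (range (D ^ (2 * k)) ⊓ ker D).subtype
            (range (D ^ (2 * k + 1)) ⊓ ker D)) :=
  finsum_congr fun k => finrank_ker_inducedQuotientMap D (2 * k)

end
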